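/- Let G be a finite simple graph on vertex set {1,…,n}, let K be the clique complex of G, let k ≥ 1 be such that K has at least one k-face, and let Δ_k be its k-th combinatorial Laplacian. Let λ̂ be a real number with λ_max(Δ_k) ≤ λ̂ ≤ n, and set H = I − Δ_k/λ̂. Then the maximum absolute column sum of H satisfies ‖H‖_1 = max_B Σ_A |H_{AB}| ≤ 2n/λ̂, where A, B range over the k-faces of K. -/

import Mathlib

/-!
On a simplicial complex the diagonal entry of `Δ_k` at a `k`-face `B` is `k + 1 + d(B)`, `d(B)`
being the up-degree, and an off-diagonal entry `Δ_{AB}` is `±1` when `A` and `B` share a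
`(k-1)`-face but `A ∪ B` is not a face, and `0` otherwise: when `A ∪ B` is a face, the signs of
the down and up contributions are opposite. Such an `A` is `B` with one vertex traded for an
outside vertex `u`, and in a clique complex two of them with the same `u` cover `B`, which would
make `B ∪ {u}` a clique. So the outside vertices of these neighbours and of the up-faces of `B`
are distinct, and `#neighbours + d(B) + (k + 1) ≤ n`. The column sum of `H` is then
`|1 - (k + 1 + d(B))/λ̂| + #neighbours/λ̂ ≤ 2n/λ̂`, as `0 < tr Δ_k ≤ #faces · λ_max ≤ #faces · λ̂`.
-/

open Matrix

/-- An abstract simplicial complex on vertex set `Fin n`: a family of nonempty finite subsets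
closed under taking nonempty subsets. -/
def IsSimplicialComplex {n : ℕ} (K : Finset (Finset (Fin n))) : Prop :=
  (∀ A ∈ K, A.Nonempty) ∧ ∀ A ∈ K, ∀ B ⊆ A, B.Nonempty → B ∈ K

/-- The faces of `K` of cardinality `c`; the `k`-faces are those of cardinality `k + 1`. -/
def FaceC {n : ℕ} (K : Finset (Finset (Fin n))) (c : ℕ) : Type :=
  {A : Finset (Fin n) // A ∈ K ∧ A.card = c}

instance {n : ℕ} (K : Finset (Finset (Fin n))) (c : ℕ) : Fintype (FaceC K c) := by
  unfold FaceC; infer_instance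

instance {n : ℕ} (K : Finset (Finset (Fin n))) (c : ℕ) : DecidableEq (FaceC K c) := by
  unfold FaceC; infer_instance

/-- The boundary operator `∂` as a matrix sending faces of cardinality `c + 1` to faces of
cardinality `c`: the face obtained by deleting the `ℓ`-th smallest vertex gets sign
`(-1)^(ℓ-1)`. -/
noncomputable def bdry {n : ℕ} (K : Finset (Finset (Fin n))) (c : ℕ) :
    Matrix (FaceC K c) (FaceC K (c + 1)) ℝ :=
  fun B A =>
    if B.1 ⊆ A.1 then
      ∑ v ∈ A.1 \ B.1, (-1 : ℝ) ^ (A.1.filter (fun u => u < v)).card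
    else 0

/-- The `k`-th combinatorial Laplacian `Δ_k = ∂_k^T ∂_k + ∂_{k+1} ∂_{k+1}^T`,
indexed by the `k`-faces (which have cardinality `k + 1`). -/
noncomputable def combLaplacian {n : ℕ} (K : Finset (Finset (Fin n))) (k : ℕ) :
    Matrix (FaceC K (k + 1)) (FaceC K (k + 1)) ℝ :=
  (bdry K k)ᵀ * bdry K k + bdry K (k + 1) * (bdry K (k + 1))ᵀ

/-- The up-degree of a `k`-face `A`: the number of `(k+1)`-faces of `K` containing `A`. -/
def upDegree {n : ℕ} (K : Finset (Finset (Fin n))) (k : ℕ) (A : Finset (Fin n)) : ℕ :=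
  (K.filter fun B => A ⊆ B ∧ B.card = k + 2).card

/-- Two distinct `k`-faces are down-up neighbors if their symmetric difference has
cardinality `2`. -/
def DownUpNbr {n : ℕ} (A B : Finset (Fin n)) : Prop :=
  A ≠ B ∧ ((A \ B) ∪ (B \ A)).card = 2

/-- Down-up neighboring `k`-faces `A`, `B` are additionally up-down neighbors if `A ∪ B`
is a `(k+1)`-face of `K`. -/
def UpDownNbr {n : ℕ} (K : Finset (Finset (Fin n))) (k : ℕ) (A B : Finset (Fin n)) : Prop :=
  DownUpNbr A B ∧ (A ∪ B) ∈ K ∧ (A ∪ B).card = k + 2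

/-- The clique complex of a finite simple graph `G` on `{1,…,n}`: the family of nonempty
cliques of `G`. -/
noncomputable def cliqueComplex {n : ℕ} (G : SimpleGraph (Fin n)) : Finset (Finset (Fin n)) :=
  @Finset.filter _ (fun A => A.Nonempty ∧ G.IsClique (A : Set (Fin n)))
    (Classical.decPred _) Finset.univ

open Finset

section FinsetLemmas
variable {α : Type*} [DecidableEq α]

lemma eq_insert_of_subset_of_card_eq_succ {s t : Finset α} {a : α} (hst : s ⊆ t) (ha : a ∈ t)
    (has : a ∉ s) (h : #t = #s + 1) : t = insert a s :=
  (eq_of_subset_of_card_le (insert_subset ha hst) (by rw [card_insert_of_notMem has, h])).symm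

lemma card_union_eq_succ_of_card_inter {A B : Finset α} (hAB : #A = #B) (h : #(A ∩ B) + 1 = #A) :
    #(A ∪ B) = #B + 1 := by
  have := card_union_add_card_inter A B
  omega

lemma union_eq_insert_of_card_inter {A B : Finset α} {u : α} (hAB : #A = #B)
    (h : #(A ∩ B) + 1 = #A) (huA : u ∈ A) (huB : u ∉ B) : A ∪ B = insert u B :=
  eq_insert_of_subset_of_card_eq_succ subset_union_right (mem_union_left B huA) huB
    (card_union_eq_succ_of_card_inter hAB h)

lemma subset_union_of_subset_insert {A₁ A₂ B : Finset α} {u : α} (hu : u ∉ B)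
    (h₁ : A₁ ⊆ insert u B) (h₂ : A₂ ⊆ insert u B) (hc₁ : #A₁ = #B) (hc₂ : #A₂ = #B)
    (hne : A₁ ≠ A₂) : B ⊆ A₁ ∪ A₂ := by
  intro y hy
  by_contra hy'
  rw [mem_union, not_or] at hy'
  have hcard : #((insert u B).erase y) = #B := by
    rw [card_erase_of_mem (mem_insert_of_mem hy), card_insert_of_notMem hu, Nat.add_sub_cancel]
  have key : ∀ A, A ⊆ insert u B → #A = #B → y ∉ A → A = (insert u B).erase y := fun A hA hc hyA =>
    eq_of_subset_of_card_le (subset_erase.2 ⟨hA, hyA⟩) (by rw [hcard, hc])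
  exact hne ((key A₁ h₁ hc₁ hy'.1).trans (key A₂ h₂ hc₂ hy'.2).symm)

lemma exists_mem_notMem_of_card_inter_lt {A B : Finset α}
    (h : #(A ∩ B) < #A) : ∃ a ∈ A, a ∉ B := by
  obtain ⟨a, haA, ha⟩ := exists_mem_notMem_of_card_lt_card h
  exact ⟨a, haA, fun haB => ha (mem_inter.2 ⟨haA, haB⟩)⟩

end FinsetLemmas

lemma SimpleGraph.isClique_insert_of_subset_union {α : Type*} {G : SimpleGraph α} {s t B : Set α}
    {u : α} (hs : G.IsClique s) (ht : G.IsClique t) (hB : G.IsClique B) (hus : u ∈ s)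
    (hut : u ∈ t) (hBst : B ⊆ s ∪ t) : G.IsClique (insert u B) :=
  SimpleGraph.isClique_insert.2 ⟨hB, fun _ hb hub =>
    (hBst hb).elim (fun h => hs hus h hub) (fun h => ht hut h hub)⟩

lemma Matrix.sum_abs_one_sub_smul_apply {ι : Type*} [Fintype ι] [DecidableEq ι]
    (M : Matrix ι ι ℝ) {c : ℝ} (hc : 0 ≤ c) (j : ι) :
    ∑ i, |(1 - c • M) i j| = |1 - c * M j j| + c * ∑ i ∈ univ.erase j, |M i j| := by
  rw [← sum_erase_add _ _ (mem_univ j), add_comm, mul_sum, sub_apply, smul_apply, one_apply_eq,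
    smul_eq_mul]
  congr 1
  refine sum_congr rfl fun i hi => ?_
  rw [sub_apply, smul_apply, one_apply_ne (ne_of_mem_erase hi), smul_eq_mul, zero_sub, abs_neg,
    abs_mul, abs_of_nonneg hc]

lemma abs_one_sub_mul_add_mul_le {x m N lam : ℝ} (hx : 0 ≤ x) (hxm : x + m ≤ N)
    (hlam : 0 < lam) (hlamN : lam ≤ N) : |1 - lam⁻¹ * x| + lam⁻¹ * m ≤ 2 * N / lam := by
  have hinv : lam⁻¹ * lam = 1 := inv_mul_cancel₀ hlam.ne'
  have hmul : (|1 - lam⁻¹ * x| + lam⁻¹ * m) * lam = |lam - x| + m := by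
    rw [add_mul, ← abs_of_pos hlam, ← abs_mul, abs_of_pos hlam, sub_mul, one_mul,
      mul_right_comm, hinv, one_mul, mul_right_comm, hinv, one_mul]
  rw [le_div_iff₀ hlam, hmul]
  cases abs_cases (lam - x) <;> linarith

lemma Matrix.IsHermitian.iSup_eigenvalues_pos {ι : Type*} [Fintype ι] [DecidableEq ι]
    {M : Matrix ι ι ℝ} (hM : M.IsHermitian) (h : 0 < M.trace) : 0 < ⨆ i, hM.eigenvalues i := by
  by_contra! hle
  have : M.trace ≤ 0 := by
    rw [hM.trace_eq_sum_eigenvalues]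
    exact sum_nonpos fun i _ => (le_ciSup (Set.finite_range _).bddAbove i).trans hle
  linarith

section Boundary
variable {n : ℕ}

noncomputable def vertexSign (A : Finset (Fin n)) (v : Fin n) : ℝ :=
  (-1) ^ #{u ∈ A | u < v}

lemma vertexSign_mul_self (A : Finset (Fin n)) (v : Fin n) :
    vertexSign A v * vertexSign A v = 1 := by
  rw [vertexSign, ← pow_add, Even.neg_one_pow (Even.add_self _)]

lemma abs_vertexSign (A : Finset (Fin n)) (v : Fin n) : |vertexSign A v| = 1 := by
  rw [vertexSign, abs_pow, abs_neg, abs_one, one_pow]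

lemma vertexSign_insert {S : Finset (Fin n)} {x : Fin n} (hx : x ∉ S) (v : Fin n) :
    vertexSign (insert x S) v = if x < v then -vertexSign S v else vertexSign S v := by
  unfold vertexSign
  rw [filter_insert]
  split_ifs with h
  · rw [card_insert_of_notMem (fun hx' => hx (mem_of_mem_filter x hx')), pow_succ, mul_neg_one]
  · rfl

lemma vertexSign_cancel {A B C : Finset (Fin n)} {a b : Fin n} (ha : a ∉ C) (hb : b ∉ C)
    (hab : a ≠ b) (hA : A = insert a C) (hB : B = insert b C) :
    vertexSign A a * vertexSign B b + vertexSign (A ∪ B) b * vertexSign (A ∪ B) a = 0 := by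
  have haB : a ∉ insert b C := by simp [hab, ha]
  have hAB : A ∪ B = insert a (insert b C) := by
    rw [hA, hB, insert_union, union_insert, union_self]
  rw [hAB, hA, hB, vertexSign_insert ha, vertexSign_insert hb, vertexSign_insert haB,
    vertexSign_insert haB, vertexSign_insert hb, vertexSign_insert hb]
  rcases hab.lt_or_gt with h | h <;>
    simp only [lt_self_iff_false, ↓reduceIte, h, h.not_gt, neg_mul, mul_neg] <;> ring

variable {K : Finset (Finset (Fin n))} {c : ℕ}

lemma bdry_apply_of_not_subset {C : FaceC K c} {A : FaceC K (c + 1)} (h : ¬C.1 ⊆ A.1) :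
    bdry K c C A = 0 :=
  if_neg h

lemma bdry_apply_of_mem_sdiff {C : FaceC K c} {A : FaceC K (c + 1)} {v : Fin n}
    (hCA : C.1 ⊆ A.1) (hvA : v ∈ A.1) (hvC : v ∉ C.1) : bdry K c C A = vertexSign A.1 v := by
  have hA : A.1 = insert v C.1 :=
    eq_insert_of_subset_of_card_eq_succ hCA hvA hvC (by rw [A.2.2, C.2.2])
  rw [bdry, if_pos hCA, hA, insert_sdiff_cancel hvC, sum_singleton]
  rfl

lemma bdry_mul_self_of_subset {C : FaceC K c} {A : FaceC K (c + 1)} (h : C.1 ⊆ A.1) :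
    bdry K c C A * bdry K c C A = 1 := by
  obtain ⟨v, hvC, hv⟩ := exists_eq_insert_iff.2 ⟨h, by rw [C.2.2, A.2.2]⟩
  rw [bdry_apply_of_mem_sdiff h (hv ▸ mem_insert_self v _) hvC, vertexSign_mul_self]

end Boundary

section BoundaryProducts
variable {n c : ℕ} {K : Finset (Finset (Fin n))}

lemma transpose_bdry_mul_bdry_apply (A B : FaceC K (c + 1)) :
    ((bdry K c)ᵀ * bdry K c) A B =
      ∑ C with C.1 ⊆ A.1 ∩ B.1, bdry K c C A * bdry K c C B := by
  rw [mul_apply, sum_filter]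
  refine sum_congr rfl fun C _ => ?_
  rw [transpose_apply]
  split_ifs with h
  · rfl
  · rw [subset_inter_iff, not_and_or] at h
    rcases h with h | h <;> simp [bdry_apply_of_not_subset h]

lemma bdry_mul_transpose_bdry_apply (A B : FaceC K c) :
    (bdry K c * (bdry K c)ᵀ) A B =
      ∑ D with A.1 ∪ B.1 ⊆ D.1, bdry K c A D * bdry K c B D := by
  rw [mul_apply, sum_filter]
  refine sum_congr rfl fun D _ => ?_
  rw [transpose_apply]
  split_ifs with h
  · rfl
  · rw [union_subset_iff, not_and_or] at h
    rcases h with h | h <;> simp [bdry_apply_of_not_subset h]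

lemma filter_subset_faceC_eq_singleton (X : FaceC K c) :
    ({Y : FaceC K c | Y.1 ⊆ X.1} : Finset _) = {X} := by
  ext Y
  simp only [mem_filter, mem_univ, true_and, mem_singleton]
  exact ⟨fun h => Subtype.ext (eq_of_subset_of_card_le h (by rw [X.2.2, Y.2.2])),
    fun h => h ▸ subset_rfl⟩

lemma filter_supset_faceC_eq_singleton (X : FaceC K c) :
    ({Y : FaceC K c | X.1 ⊆ Y.1} : Finset _) = {X} := by
  ext Y
  simp only [mem_filter, mem_univ, true_and, mem_singleton]
  exact ⟨fun h => Subtype.ext (eq_of_subset_of_card_le h (by rw [X.2.2, Y.2.2])).symm,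
    fun h => h ▸ subset_rfl⟩

lemma transpose_bdry_mul_bdry_apply_self (A : FaceC K (c + 1)) :
    ((bdry K c)ᵀ * bdry K c) A A = #{C : FaceC K c | C.1 ⊆ A.1} := by
  rw [transpose_bdry_mul_bdry_apply, inter_self,
    sum_congr rfl fun C hC => bdry_mul_self_of_subset (mem_filter.1 hC).2, sum_const, nsmul_one]

lemma bdry_mul_transpose_bdry_apply_self (A : FaceC K c) :
    (bdry K c * (bdry K c)ᵀ) A A = #{D : FaceC K (c + 1) | A.1 ⊆ D.1} := by
  rw [bdry_mul_transpose_bdry_apply, union_self,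
    sum_congr rfl fun D hD => bdry_mul_self_of_subset (mem_filter.1 hD).2, sum_const, nsmul_one]

lemma transpose_bdry_mul_bdry_apply_of_inter_eq {A B : FaceC K (c + 1)} (C : FaceC K c)
    (hC : C.1 = A.1 ∩ B.1) : ((bdry K c)ᵀ * bdry K c) A B = bdry K c C A * bdry K c C B := by
  rw [transpose_bdry_mul_bdry_apply, ← hC, filter_subset_faceC_eq_singleton, sum_singleton]

lemma bdry_mul_transpose_bdry_apply_of_union_eq {A B : FaceC K c} (D : FaceC K (c + 1))
    (hD : D.1 = A.1 ∪ B.1) : (bdry K c * (bdry K c)ᵀ) A B = bdry K c A D * bdry K c B D := by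
  rw [bdry_mul_transpose_bdry_apply, ← hD, filter_supset_faceC_eq_singleton, sum_singleton]

lemma transpose_bdry_mul_bdry_apply_eq_zero {A B : FaceC K (c + 1)}
    (h : ∀ C : FaceC K c, ¬C.1 ⊆ A.1 ∩ B.1) : ((bdry K c)ᵀ * bdry K c) A B = 0 := by
  rw [transpose_bdry_mul_bdry_apply, filter_false_of_mem fun C _ => h C, sum_empty]

lemma bdry_mul_transpose_bdry_apply_eq_zero {A B : FaceC K c}
    (h : ∀ D : FaceC K (c + 1), ¬A.1 ∪ B.1 ⊆ D.1) : (bdry K c * (bdry K c)ᵀ) A B = 0 := by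
  rw [bdry_mul_transpose_bdry_apply, filter_false_of_mem fun D _ => h D, sum_empty]

end BoundaryProducts

section Neighbors
variable {n : ℕ}

lemma downUpNbr_iff {A B : Finset (Fin n)} (hAB : #A = #B) :
    DownUpNbr A B ↔ A ≠ B ∧ #(A ∩ B) + 1 = #A := by
  have hA := card_sdiff_add_card_inter A B
  have hB := card_sdiff_add_card_inter B A
  rw [inter_comm] at hB
  rw [DownUpNbr, card_union_of_disjoint disjoint_sdiff_sdiff]
  refine and_congr_right fun _ => ?_
  omega

noncomputable def downOnlyNbrs (K : Finset (Finset (Fin n))) (k : ℕ) (B : FaceC K (k + 1)) :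
    Finset (FaceC K (k + 1)) :=
  @filter _ (fun A => DownUpNbr A.1 B.1 ∧ ¬UpDownNbr K k A.1 B.1) (Classical.decPred _) univ

variable {k : ℕ} {K : Finset (Finset (Fin n))}

lemma mem_downOnlyNbrs {A B : FaceC K (k + 1)} :
    A ∈ downOnlyNbrs K k B ↔ A ≠ B ∧ #(A.1 ∩ B.1) = k ∧ A.1 ∪ B.1 ∉ K := by
  have hAB : #A.1 = #B.1 := by rw [A.2.2, B.2.2]
  have hcard (h : #(A.1 ∩ B.1) + 1 = #A.1) : #(A.1 ∪ B.1) = k + 2 := by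
    rw [card_union_eq_succ_of_card_inter hAB h, B.2.2]
  have hne : A ≠ B ↔ A.1 ≠ B.1 := Subtype.ext_iff.not
  rw [downOnlyNbrs, @mem_filter _ _ (Classical.decPred _), UpDownNbr, downUpNbr_iff hAB, hne,
    A.2.2]
  constructor
  · rintro ⟨_, ⟨hne, h⟩, hup⟩
    exact ⟨hne, by omega, fun hU => hup ⟨⟨hne, h⟩, hU, hcard (by rw [h, A.2.2])⟩⟩
  · rintro ⟨hne, h, hU⟩
    exact ⟨mem_univ _, ⟨hne, by omega⟩, fun hup => hU hup.2.1⟩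

lemma union_eq_insert_of_mem_downOnlyNbrs {A B : FaceC K (k + 1)} {u : Fin n}
    (hA : A ∈ downOnlyNbrs K k B) (huA : u ∈ A.1) (huB : u ∉ B.1) : A.1 ∪ B.1 = insert u B.1 :=
  union_eq_insert_of_card_inter (by rw [A.2.2, B.2.2])
    (by rw [(mem_downOnlyNbrs.1 hA).2.1, A.2.2]) huA huB

end Neighbors

section Laplacian
variable {n k : ℕ} {K : Finset (Finset (Fin n))}

lemma card_filter_faceC (c : ℕ) (p : Finset (Fin n) → Prop) [DecidablePred p] :
    #{C : FaceC K c | p C.1} = #{s ∈ K | #s = c ∧ p s} := by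
  refine card_bij (fun C _ => C.1) (fun C hC => ?_) (fun C₁ _ C₂ _ h => Subtype.ext h)
    (fun s hs => ?_)
  · rw [mem_filter] at hC ⊢
    exact ⟨C.2.1, C.2.2, hC.2⟩
  · rw [mem_filter] at hs
    exact ⟨⟨s, hs.1, hs.2.1⟩, mem_filter.2 ⟨mem_univ _, hs.2.2⟩, rfl⟩

lemma card_faceC_subset (hK : IsSimplicialComplex K) {c : ℕ} (hc : 1 ≤ c) (A : FaceC K (c + 1)) :
    #{C : FaceC K c | C.1 ⊆ A.1} = c + 1 := by
  have hfaces : {s ∈ K | #s = c ∧ s ⊆ A.1} = A.1.powersetCard c := by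
    ext s
    rw [mem_filter, mem_powersetCard]
    refine ⟨fun h => ⟨h.2.2, h.2.1⟩, fun h => ⟨hK.2 A.1 A.2.1 s h.1 ?_, h.2, h.1⟩⟩
    rw [← card_pos, h.2]
    omega
  rw [card_filter_faceC c (· ⊆ A.1), hfaces, card_powersetCard, A.2.2, Nat.choose_succ_self_right]

lemma card_faceC_supset (A : FaceC K (k + 1)) :
    #{D : FaceC K (k + 2) | A.1 ⊆ D.1} = upDegree K k A.1 := by
  refine (card_filter_faceC (k + 2) (A.1 ⊆ ·)).trans ?_
  rw [upDegree]
  simp only [and_comm]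

lemma combLaplacian_apply_self (hK : IsSimplicialComplex K) (hk : 1 ≤ k) (A : FaceC K (k + 1)) :
    combLaplacian K k A A = k + 1 + upDegree K k A.1 := by
  rw [combLaplacian, Matrix.add_apply, transpose_bdry_mul_bdry_apply_self,
    bdry_mul_transpose_bdry_apply_self, card_faceC_subset hK hk, card_faceC_supset]
  push_cast
  rfl

variable {A B : FaceC K (k + 1)} {a b : Fin n}

lemma combLaplacian_apply_of_card_inter_lt (h : #(A.1 ∩ B.1) < k) :
    combLaplacian K k A B = 0 := by
  have hunion := card_union_add_card_inter A.1 B.1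
  rw [A.2.2, B.2.2] at hunion
  have hdown : ((bdry K k)ᵀ * bdry K k) A B = 0 :=
    transpose_bdry_mul_bdry_apply_eq_zero fun C hC => by
      have := card_le_card hC
      rw [C.2.2] at this
      omega
  have hup : (bdry K (k + 1) * (bdry K (k + 1))ᵀ) A B = 0 :=
    bdry_mul_transpose_bdry_apply_eq_zero fun D hD => by
      have := card_le_card hD
      rw [D.2.2] at this
      omega
  rw [combLaplacian, Matrix.add_apply, hdown, hup, add_zero]

lemma transpose_bdry_mul_bdry_apply_of_card_inter (hK : IsSimplicialComplex K) (hk : 1 ≤ k)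
    (h : #(A.1 ∩ B.1) = k) (haA : a ∈ A.1) (haB : a ∉ B.1) (hbB : b ∈ B.1) (hbA : b ∉ A.1) :
    ((bdry K k)ᵀ * bdry K k) A B = vertexSign A.1 a * vertexSign B.1 b := by
  have hC : A.1 ∩ B.1 ∈ K := hK.2 A.1 A.2.1 _ inter_subset_left (by rw [← card_pos, h]; omega)
  rw [transpose_bdry_mul_bdry_apply_of_inter_eq ⟨A.1 ∩ B.1, hC, h⟩ rfl]
  exact congrArg₂ (· * ·)
    (bdry_apply_of_mem_sdiff inter_subset_left haA fun ha => haB (mem_inter.1 ha).2)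
    (bdry_apply_of_mem_sdiff inter_subset_right hbB fun hb => hbA (mem_inter.1 hb).1)

lemma combLaplacian_apply_of_union_mem (hK : IsSimplicialComplex K) (hk : 1 ≤ k)
    (h : #(A.1 ∩ B.1) = k) (haA : a ∈ A.1) (haB : a ∉ B.1) (hbB : b ∈ B.1) (hbA : b ∉ A.1)
    (hU : A.1 ∪ B.1 ∈ K) : combLaplacian K k A B = 0 := by
  have hcard : #(A.1 ∪ B.1) = k + 2 := by
    rw [card_union_eq_succ_of_card_inter (by rw [A.2.2, B.2.2]) (by rw [h, A.2.2]), B.2.2]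
  have haC : a ∉ A.1 ∩ B.1 := fun ha => haB (mem_inter.1 ha).2
  have hbC : b ∉ A.1 ∩ B.1 := fun hb => hbA (mem_inter.1 hb).1
  rw [combLaplacian, Matrix.add_apply,
    transpose_bdry_mul_bdry_apply_of_card_inter hK hk h haA haB hbB hbA,
    bdry_mul_transpose_bdry_apply_of_union_eq ⟨A.1 ∪ B.1, hU, hcard⟩ rfl]
  have hAD := bdry_apply_of_mem_sdiff (K := K) (C := A) (A := ⟨A.1 ∪ B.1, hU, hcard⟩)
    subset_union_left (mem_union_right _ hbB) hbA
  have hBD := bdry_apply_of_mem_sdiff (K := K) (C := B) (A := ⟨A.1 ∪ B.1, hU, hcard⟩)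
    subset_union_right (mem_union_left _ haA) haB
  rw [hAD, hBD]
  exact vertexSign_cancel haC hbC (fun hab => haB (hab ▸ hbB))
    (eq_insert_of_subset_of_card_eq_succ inter_subset_left haA haC (by rw [h, A.2.2]))
    (eq_insert_of_subset_of_card_eq_succ inter_subset_right hbB hbC (by rw [h, B.2.2]))

lemma abs_combLaplacian_apply_of_union_notMem (hK : IsSimplicialComplex K) (hk : 1 ≤ k)
    (h : #(A.1 ∩ B.1) = k) (haA : a ∈ A.1) (haB : a ∉ B.1) (hbB : b ∈ B.1) (hbA : b ∉ A.1)
    (hU : A.1 ∪ B.1 ∉ K) : |combLaplacian K k A B| = 1 := by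
  have hcard : #(A.1 ∪ B.1) = k + 2 := by
    rw [card_union_eq_succ_of_card_inter (by rw [A.2.2, B.2.2]) (by rw [h, A.2.2]), B.2.2]
  have hup : (bdry K (k + 1) * (bdry K (k + 1))ᵀ) A B = 0 :=
    bdry_mul_transpose_bdry_apply_eq_zero fun D hD =>
      hU (eq_of_subset_of_card_le hD (by rw [D.2.2, hcard]) ▸ D.2.1)
  rw [combLaplacian, Matrix.add_apply,
    transpose_bdry_mul_bdry_apply_of_card_inter hK hk h haA haB hbB hbA,
    hup, add_zero, abs_mul, abs_vertexSign, abs_vertexSign, mul_one]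

lemma abs_combLaplacian_apply_of_ne (hK : IsSimplicialComplex K) (hk : 1 ≤ k) (hAB : A ≠ B) :
    |combLaplacian K k A B| = if A ∈ downOnlyNbrs K k B then 1 else 0 := by
  have hle : #(A.1 ∩ B.1) ≤ k := by
    by_contra! hgt
    have hAB' : A.1 ∩ B.1 = A.1 := eq_of_subset_of_card_le inter_subset_left (by rw [A.2.2]; omega)
    exact hAB (Subtype.ext (eq_of_subset_of_card_le (inter_eq_left.1 hAB') (by rw [A.2.2, B.2.2])))
  rcases hle.lt_or_eq with hlt | h
  · rw [combLaplacian_apply_of_card_inter_lt hlt, abs_zero,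
      if_neg fun h' => hlt.ne (mem_downOnlyNbrs.1 h').2.1]
  obtain ⟨a, haA, haB⟩ := exists_mem_notMem_of_card_inter_lt (A := A.1) (B := B.1)
    (by rw [h, A.2.2]; omega)
  obtain ⟨b, hbB, hbA⟩ := exists_mem_notMem_of_card_inter_lt (A := B.1) (B := A.1)
    (by rw [inter_comm, h, B.2.2]; omega)
  by_cases hU : A.1 ∪ B.1 ∈ K
  · rw [combLaplacian_apply_of_union_mem hK hk h haA haB hbB hbA hU, abs_zero,
      if_neg fun h' => (mem_downOnlyNbrs.1 h').2.2 hU]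
  · rw [abs_combLaplacian_apply_of_union_notMem hK hk h haA haB hbB hbA hU,
      if_pos (mem_downOnlyNbrs.2 ⟨hAB, h, hU⟩)]

lemma sum_erase_abs_combLaplacian_apply (hK : IsSimplicialComplex K) (hk : 1 ≤ k) :
    ∑ A ∈ univ.erase B, |combLaplacian K k A B| = #(downOnlyNbrs K k B) := by
  rw [sum_congr rfl fun A hA => abs_combLaplacian_apply_of_ne hK hk (ne_of_mem_erase hA), sum_boole,
    filter_mem_eq_inter,
    inter_eq_right.2 fun A hA => mem_erase.2 ⟨(mem_downOnlyNbrs.1 hA).1, mem_univ A⟩]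

end Laplacian

lemma upDegree_le_card_filter_insert_mem {n k : ℕ} {K : Finset (Finset (Fin n))}
    {A : Finset (Fin n)} (hA : #A = k + 1) : upDegree K k A ≤ #{u ∈ Aᶜ | insert u A ∈ K} := by
  refine (card_le_card fun D hD => ?_).trans (card_image_le (f := fun u => insert u A))
  obtain ⟨hDK, hAD, hD⟩ := mem_filter.1 hD
  obtain ⟨u, huA, rfl⟩ := exists_eq_insert_iff.2 ⟨hAD, by rw [hA, hD]⟩
  exact mem_image.2 ⟨u, mem_filter.2 ⟨mem_compl.2 huA, hDK⟩, rfl⟩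

section CliqueComplex
variable {n k : ℕ} {G : SimpleGraph (Fin n)}

lemma mem_cliqueComplex {A : Finset (Fin n)} :
    A ∈ cliqueComplex G ↔ A.Nonempty ∧ G.IsClique (A : Set (Fin n)) := by
  rw [cliqueComplex, @mem_filter _ _ (Classical.decPred _)]
  exact and_iff_right (mem_univ A)

lemma isSimplicialComplex_cliqueComplex (G : SimpleGraph (Fin n)) :
    IsSimplicialComplex (cliqueComplex G) :=
  ⟨fun _ hA => (mem_cliqueComplex.1 hA).1, fun _ hA _ hBA hB =>
    mem_cliqueComplex.2 ⟨hB, (mem_cliqueComplex.1 hA).2.subset (coe_subset.2 hBA)⟩⟩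

lemma card_downOnlyNbrs_le (B : FaceC (cliqueComplex G) (k + 1)) :
    #(downOnlyNbrs (cliqueComplex G) k B) ≤ #{u ∈ B.1ᶜ | insert u B.1 ∉ cliqueComplex G} := by
  refine card_le_card_of_forall_subsingleton (fun A u => u ∈ A.1) (fun A hA => ?_)
    (fun u hu => ?_)
  · obtain ⟨-, h, hU⟩ := mem_downOnlyNbrs.1 hA
    obtain ⟨u, huA, huB⟩ := exists_mem_notMem_of_card_inter_lt (A := A.1) (B := B.1)
      (by rw [h, A.2.2]; omega)
    rw [union_eq_insert_of_mem_downOnlyNbrs hA huA huB] at hU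
    exact ⟨u, mem_filter.2 ⟨mem_compl.2 huB, hU⟩, huA⟩
  · rintro A₁ ⟨hA₁, hu₁⟩ A₂ ⟨hA₂, hu₂⟩
    by_contra hne
    obtain ⟨huB, hU⟩ := mem_filter.1 hu
    have huB : u ∉ B.1 := mem_compl.1 huB
    have hsub : ∀ A ∈ downOnlyNbrs (cliqueComplex G) k B, u ∈ A.1 → A.1 ⊆ insert u B.1 :=
      fun A hA huA => union_eq_insert_of_mem_downOnlyNbrs hA huA huB ▸ subset_union_left
    have hB : B.1 ⊆ A₁.1 ∪ A₂.1 :=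
      subset_union_of_subset_insert huB (hsub A₁ hA₁ hu₁) (hsub A₂ hA₂ hu₂)
        (by rw [A₁.2.2, B.2.2]) (by rw [A₂.2.2, B.2.2]) fun h => hne (Subtype.ext h)
    refine hU (mem_cliqueComplex.2 ⟨insert_nonempty u B.1, ?_⟩)
    rw [coe_insert]
    exact SimpleGraph.isClique_insert_of_subset_union (mem_cliqueComplex.1 A₁.2.1).2
      (mem_cliqueComplex.1 A₂.2.1).2 (mem_cliqueComplex.1 B.2.1).2 hu₁ hu₂
      (by rw [← coe_union]; exact coe_subset.2 hB)

lemma card_downOnlyNbrs_add_upDegree_le (B : FaceC (cliqueComplex G) (k + 1)) :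
    #(downOnlyNbrs (cliqueComplex G) k B) + upDegree (cliqueComplex G) k B.1 + (k + 1) ≤ n := by
  have hdown := card_downOnlyNbrs_le B
  have hup := upDegree_le_card_filter_insert_mem (K := cliqueComplex G) B.2.2
  have hsplit := card_filter_add_card_filter_not (s := B.1ᶜ)
    (fun u => insert u B.1 ∈ cliqueComplex G)
  have hB := card_le_univ B.1
  rw [card_compl, Fintype.card_fin, B.2.2] at hsplit
  rw [Fintype.card_fin, B.2.2] at hB
  omega

end CliqueComplex

theorem clique_column_sum_bound_general
    {n k : ℕ} (G : SimpleGraph (Fin n)) (hk : 1 ≤ k)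
    (lam : ℝ) (hΔ : (combLaplacian (cliqueComplex G) k).IsHermitian)
    (hlam₁ : (⨆ i, hΔ.eigenvalues i) ≤ lam) (hlam₂ : lam ≤ (n : ℝ)) :
    ∀ B : FaceC (cliqueComplex G) (k + 1),
      ∑ A : FaceC (cliqueComplex G) (k + 1),
          |((1 : Matrix (FaceC (cliqueComplex G) (k + 1)) (FaceC (cliqueComplex G) (k + 1)) ℝ)
              - lam⁻¹ • combLaplacian (cliqueComplex G) k) A B| ≤
        2 * n / lam := by
  intro B
  have hK := isSimplicialComplex_cliqueComplex G
  have htrace : 0 < (combLaplacian (cliqueComplex G) k).trace :=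
    sum_pos (fun A _ => by rw [diag_apply, combLaplacian_apply_self hK hk]; positivity)
      ⟨B, mem_univ B⟩
  have hlam : 0 < lam := (hΔ.iSup_eigenvalues_pos htrace).trans_le hlam₁
  have hcount : (k + 1 + upDegree (cliqueComplex G) k B.1 : ℝ) +
      #(downOnlyNbrs (cliqueComplex G) k B) ≤ n := by
    have := card_downOnlyNbrs_add_upDegree_le B
    exact_mod_cast (by omega :
      k + 1 + upDegree (cliqueComplex G) k B.1 + #(downOnlyNbrs (cliqueComplex G) k B) ≤ n)
  rw [Matrix.sum_abs_one_sub_smul_apply _ (inv_nonneg.2 hlam.le), combLaplacian_apply_self hK hk,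
    sum_erase_abs_combLaplacian_apply hK hk]
  exact abs_one_sub_mul_add_mul_le (by positivity) hcount hlam hlam₂

/-- For the clique complex `K` of a graph `G` on `{1,…,n}`, `k ≥ 1` such that `K` has a
`k`-face, and a real `λ̂` with `λ_max(Δ_k) ≤ λ̂ ≤ n`, the matrix `H = I - Δ_k/λ̂` has maximum
absolute column sum `‖H‖_1 = max_B Σ_A |H_{AB}| ≤ 2n/λ̂`. -/
theorem clique_column_sum_bound
    {n k : ℕ} (G : SimpleGraph (Fin n)) (hk : 1 ≤ k)
    (hne : Nonempty (FaceC (cliqueComplex G) (k + 1)))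
    (lam : ℝ) (hΔ : (combLaplacian (cliqueComplex G) k).IsHermitian)
    (hlam₁ : (⨆ i, hΔ.eigenvalues i) ≤ lam) (hlam₂ : lam ≤ (n : ℝ)) :
    ∀ B : FaceC (cliqueComplex G) (k + 1),
      ∑ A : FaceC (cliqueComplex G) (k + 1),
          |((1 : Matrix (FaceC (cliqueComplex G) (k + 1)) (FaceC (cliqueComplex G) (k + 1)) ℝ)
              - lam⁻¹ • combLaplacian (cliqueComplex G) k) A B| ≤
        2 * n / lam :=
  clique_column_sum_bound_general G hk lam hΔ hlam₁ hlam₂
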